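/- arXiv:1401.0688 — 2 statements merged into one kernel-verified Lean document; each statement's English description precedes it below -/
import Mathlib

section
/- (The unique quantile uniquely minimizes the expected check loss.) Let u be an integrable real random variable with distribution function F, let τ ∈ (0,1), and suppose ξ ∈ ℝ satisfies F(ξ − ε) < τ < F(ξ + ε) for all ε > 0 (so ξ is the unique τ-th quantile of u). Define H(x) = E[ρ_τ(u − x) − ρ_τ(u − ξ)], where ρ_τ(v) = v(τ − 1{v<0}). Then H(x) ≥ 0 for all x ∈ ℝ, and H(x) = 0 if and only if x = ξ. -/
/-! The expected check loss `G c = E[ρ_τ(u − c)]` is convex, since `ρ_τ v = max (τ v) ((τ − 1) v)`,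
and `F c − τ` is a subgradient of `G` at every `c` (the right derivative of `c ↦ ρ_τ(w − c)` is
`1{w ≤ c} − τ`). By the quantile condition this subgradient is negative left of `ξ` and positive
right of `ξ`, so `G` strictly decreases on `(−∞, ξ)` and strictly increases on `(ξ, ∞)`. As the
subgradient is bounded by `1`, `G` is `1`-Lipschitz, and continuity at `ξ` gives `G ξ < G x` for
every `x ≠ ξ`, even when `F ξ = τ`. Finally `H x = G x − G ξ`. -/

open MeasureTheory Filter Topology Set

def IsSubgradient (g G : ℝ → ℝ) : Prop :=
  ∀ c d, (d - c) * g c ≤ G d - G c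

namespace IsSubgradient

variable {g G : ℝ → ℝ}

theorem lipschitzWith (h : IsSubgradient g G) {K : NNReal} (hg : ∀ c, |g c| ≤ K) :
    LipschitzWith K G := by
  refine LipschitzWith.of_le_add_mul K fun x y => ?_
  have : -((y - x) * g x) ≤ K * dist x y := by
    rw [Real.dist_eq, abs_sub_comm, mul_comm (K : ℝ)]
    calc -((y - x) * g x) ≤ |y - x| * |g x| := (neg_le_abs _).trans (abs_mul _ _).le
      _ ≤ |y - x| * K := by gcongr; exact hg x
  linarith [h x y]

theorem comp_neg (h : IsSubgradient g G) : IsSubgradient (fun c => -g (-c)) (fun c => G (-c)) :=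
  fun c d => by linarith [h (-c) (-d)]

theorem lt_of_pos_right (h : IsSubgradient g G) (hG : Continuous G) {ξ x : ℝ}
    (hg : ∀ c, ξ < c → 0 < g c) (hx : ξ < x) : G ξ < G x := by
  obtain ⟨m, hξm, hmx⟩ := exists_between hx
  have hGm : G m < G x := by nlinarith [h m x, hg m hξm]
  have hle : ∀ᶠ c in 𝓝[>] ξ, G c ≤ G m := by
    filter_upwards [Ioo_mem_nhdsGT hξm] with c hc
    nlinarith [h c m, hg c hc.1, hc.2]
  exact (le_of_tendsto (hG.tendsto ξ |>.mono_left nhdsWithin_le_nhds) hle).trans_lt hGm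

theorem lt_of_neg_left (h : IsSubgradient g G) (hG : Continuous G) {ξ x : ℝ}
    (hg : ∀ c, c < ξ → g c < 0) (hx : x < ξ) : G ξ < G x := by
  simpa using h.comp_neg.lt_of_pos_right (hG.comp continuous_neg)
    (fun c hc => neg_pos.2 (hg (-c) (by linarith))) (neg_lt_neg hx)

end IsSubgradient

noncomputable def checkLoss (τ v : ℝ) : ℝ := v * (τ - if v < 0 then 1 else 0)

theorem checkLoss_eq_max (τ v : ℝ) : checkLoss τ v = max (τ * v) ((τ - 1) * v) := by
  unfold checkLoss
  split_ifs with hv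
  · rw [max_eq_right (by nlinarith)]; ring
  · rw [max_eq_left (by nlinarith)]; ring

theorem sub_mul_indicator_sub_le_checkLoss_sub (τ c d w : ℝ) :
    (d - c) * ((Iic c).indicator 1 w - τ) ≤ checkLoss τ (w - d) - checkLoss τ (w - c) := by
  simp only [checkLoss_eq_max]
  by_cases hw : w ≤ c
  · rw [indicator_of_mem (mem_Iic.2 hw), Pi.one_apply,
      max_eq_right (a := τ * (w - c)) (by nlinarith)]
    linarith [le_max_right (τ * (w - d)) ((τ - 1) * (w - d))]
  · rw [indicator_of_notMem (by simpa using hw),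
      max_eq_left (a := τ * (w - c)) (by nlinarith [not_le.1 hw])]
    linarith [le_max_left (τ * (w - d)) ((τ - 1) * (w - d))]

theorem integrable_checkLoss {Ω : Type*} [MeasurableSpace Ω] {μ : Measure Ω} [IsFiniteMeasure μ]
    {u : Ω → ℝ} (hu : Integrable u μ) (τ c : ℝ) :
    Integrable (fun ω => checkLoss τ (u ω - c)) μ := by
  simp only [checkLoss_eq_max]
  exact ((hu.sub (integrable_const c)).const_mul τ).sup ((hu.sub (integrable_const c)).const_mul _)

theorem isSubgradient_integral_checkLoss {Ω : Type*} [MeasurableSpace Ω] {μ : Measure Ω}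
    [IsProbabilityMeasure μ] {u : Ω → ℝ} (hu : Integrable u μ) (τ : ℝ) :
    IsSubgradient (fun c => μ.real {ω | u ω ≤ c} - τ) (fun c => ∫ ω, checkLoss τ (u ω - c) ∂μ) := by
  intro c d
  have hS : NullMeasurableSet (u ⁻¹' Iic c) μ := hu.aemeasurable.nullMeasurable measurableSet_Iic
  have hind : Integrable ((u ⁻¹' Iic c).indicator (1 : Ω → ℝ)) μ :=
    (integrable_const 1).indicator₀ hS
  have hloss (x : ℝ) := integrable_checkLoss hu τ x
  calc (d - c) * (μ.real {ω | u ω ≤ c} - τ)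
      = ∫ ω, (d - c) * ((u ⁻¹' Iic c).indicator (1 : Ω → ℝ) ω - τ) ∂μ := by
        rw [integral_const_mul, integral_sub hind (integrable_const τ), integral_indicator₀ hS]
        simp [preimage]
    _ ≤ ∫ ω, (checkLoss τ (u ω - d) - checkLoss τ (u ω - c)) ∂μ :=
        integral_mono ((hind.sub (integrable_const τ)).const_mul _) ((hloss d).sub (hloss c))
          fun ω => sub_mul_indicator_sub_le_checkLoss_sub τ c d (u ω)
    _ = _ := integral_sub (hloss d) (hloss c)

/-- **The unique quantile uniquely minimizes the expected check loss.**
Let `u` be an integrable real random variable with distribution function `F`,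
let `τ ∈ (0,1)`, and let `ξ` satisfy `F(ξ − ε) < τ < F(ξ + ε)` for all `ε > 0`.
With `ρ_τ(v) = v(τ − 1{v<0})` and `H(x) = E[ρ_τ(u − x) − ρ_τ(u − ξ)]`,
one has `H(x) ≥ 0` for all `x`, and `H(x) = 0` iff `x = ξ`. -/
theorem stmt10 {Ω : Type*} [MeasurableSpace Ω] (μ : Measure Ω) [IsProbabilityMeasure μ]
    (u : Ω → ℝ) (hu : Integrable u μ)
    (F : ℝ → ℝ) (hF : ∀ x, F x = (μ {ω | u ω ≤ x}).toReal)
    (τ : ℝ) (hτ : τ ∈ Set.Ioo (0 : ℝ) 1)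
    (ξ : ℝ) (hξ : ∀ ε > (0 : ℝ), F (ξ - ε) < τ ∧ τ < F (ξ + ε))
    (ρ : ℝ → ℝ) (hρ : ∀ v, ρ v = v * (τ - if v < 0 then 1 else 0))
    (H : ℝ → ℝ) (hH : ∀ x, H x = ∫ ω, (ρ (u ω - x) - ρ (u ω - ξ)) ∂μ) :
    (∀ x, 0 ≤ H x) ∧ ∀ x, (H x = 0 ↔ x = ξ) := by
  obtain rfl : F = fun c => μ.real {ω | u ω ≤ c} := funext hF
  obtain rfl : ρ = checkLoss τ := funext hρ
  set G := fun c => ∫ ω, checkLoss τ (u ω - c) ∂μ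
  have hHG (x : ℝ) : H x = G x - G ξ := by
    rw [hH, integral_sub (integrable_checkLoss hu τ x) (integrable_checkLoss hu τ ξ)]
  have hsub := isSubgradient_integral_checkLoss hu τ
  have hbound (c : ℝ) : |μ.real {ω | u ω ≤ c} - τ| ≤ (1 : NNReal) := by
    rw [NNReal.coe_one, abs_le]
    constructor <;> linarith [hτ.1, hτ.2, measureReal_nonneg (μ := μ) (s := {ω | u ω ≤ c}),
      measureReal_le_one (μ := μ) (s := {ω | u ω ≤ c})]
  have hG : Continuous G := (hsub.lipschitzWith hbound).continuous
  have hmin (x : ℝ) (hx : x ≠ ξ) : G ξ < G x := by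
    rcases hx.lt_or_gt with hx | hx
    · refine hsub.lt_of_neg_left hG (fun c hc => ?_) hx
      simpa using sub_neg.2 (hξ (ξ - c) (by linarith)).1
    · refine hsub.lt_of_pos_right hG (fun c hc => ?_) hx
      simpa using sub_pos.2 (hξ (c - ξ) (by linarith)).2
  refine ⟨fun x => ?_, fun x => ⟨fun hx0 => by_contra fun hx => ?_, fun hx => by simp [hHG, hx]⟩⟩
  · rcases eq_or_ne x ξ with rfl | hx
    · simp [hHG]
    · linarith [hHG x, hmin x hx]
  · linarith [hHG x, hmin x hx]
end

section
/- (First identity condition from the identifiability proof.) Let a, A, B, ξ, ξ' ∈ ℝ and c₁, c₂, c₁', c₂', C, D ≥ 0. If for every x ∈ ℝ one has a·x + A − ξ·√(c₁((x+B)⁺)² + c₂((x+B)⁻)² + C) + ξ'·√(c₁'(x⁺)² + c₂'(x⁻)² + D) = 0, then a − ξ√c₁ + ξ'√c₁' = 0 and a + ξ√c₂ − ξ'√c₂' = 0. -/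
/-!
Divide the identity by `x` and let `x → +∞`, resp. `x → -∞`. On each side the positive and
negative parts collapse, each square root grows like `√c · |x|`, and the constant terms
vanish in the limit, so the slopes `a - ξ√c₁ + ξ'√c₁'` and `-a - ξ√c₂ + ξ'√c₂'` must be zero.
-/

open Filter Topology

lemma tendsto_mul_add_div_atTop (a b : ℝ) :
    Tendsto (fun x : ℝ => (a * x + b) / x) atTop (𝓝 a) := by
  have h : Tendsto (fun x : ℝ => a + b / x) atTop (𝓝 (a + 0)) :=
    tendsto_const_nhds.add (tendsto_const_nhds.div_atTop tendsto_id)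
  rw [add_zero] at h
  refine h.congr' ?_
  filter_upwards [eventually_ne_atTop 0] with x hx
  field_simp

lemma tendsto_sqrt_mul_add_sq_add_div_atTop (c b C : ℝ) :
    Tendsto (fun x : ℝ => √(c * (x + b) ^ 2 + C) / x) atTop (𝓝 √c) := by
  have hquot : Tendsto (fun x : ℝ => c * ((x + b) / x) ^ 2 + C / x ^ 2) atTop (𝓝 c) := by
    have hb : Tendsto (fun x : ℝ => (x + b) / x) atTop (𝓝 1) := by
      simpa using tendsto_mul_add_div_atTop 1 b
    simpa using (tendsto_const_nhds.mul (hb.pow 2)).add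
      (tendsto_const_nhds.div_atTop (tendsto_pow_atTop two_ne_zero))
  refine hquot.sqrt.congr' ?_
  filter_upwards [eventually_gt_atTop 0] with x hx
  have hsplit : c * ((x + b) / x) ^ 2 + C / x ^ 2 = (c * (x + b) ^ 2 + C) / x ^ 2 := by
    field_simp
  rw [hsplit, Real.sqrt_div' _ (sq_nonneg x), Real.sqrt_sq hx.le]

lemma slope_eq_zero_of_eventually_eq_zero (a A b ξ ξ' c c' C D : ℝ)
    (h : ∀ᶠ x : ℝ in atTop,
      a * x + A - ξ * √(c * (x + b) ^ 2 + C) + ξ' * √(c' * x ^ 2 + D) = 0) :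
    a - ξ * √c + ξ' * √c' = 0 := by
  have hslope : Tendsto (fun x : ℝ =>
      (a * x + A - ξ * √(c * (x + b) ^ 2 + C) + ξ' * √(c' * x ^ 2 + D)) / x)
      atTop (𝓝 (a - ξ * √c + ξ' * √c')) := by
    have hc' : Tendsto (fun x : ℝ => √(c' * x ^ 2 + D) / x) atTop (𝓝 √c') := by
      simpa using tendsto_sqrt_mul_add_sq_add_div_atTop c' 0 D
    refine ((tendsto_mul_add_div_atTop a A).sub
      ((tendsto_sqrt_mul_add_sq_add_div_atTop c b C).const_mul ξ)).add
      (hc'.const_mul ξ') |>.congr fun x => ?_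
    simp only [sub_div, add_div, mul_div_assoc]
  have hzero : Tendsto (fun x : ℝ =>
      (a * x + A - ξ * √(c * (x + b) ^ 2 + C) + ξ' * √(c' * x ^ 2 + D)) / x)
      atTop (𝓝 0) :=
    tendsto_const_nhds.congr' <| h.mono fun x hx => by simp [hx]
  exact tendsto_nhds_unique hslope hzero

lemma sqrt_max_sq_add_of_nonneg {t : ℝ} (ht : 0 ≤ t) (c₁ c₂ C : ℝ) :
    √(c₁ * (max t 0) ^ 2 + c₂ * (max (-t) 0) ^ 2 + C) = √(c₁ * t ^ 2 + C) := by
  rw [max_eq_left ht, max_eq_right (neg_nonpos.2 ht)]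
  ring_nf

lemma sqrt_max_sq_add_of_nonpos {t : ℝ} (ht : t ≤ 0) (c₁ c₂ C : ℝ) :
    √(c₁ * (max t 0) ^ 2 + c₂ * (max (-t) 0) ^ 2 + C) = √(c₂ * t ^ 2 + C) := by
  rw [max_eq_right ht, max_eq_left (neg_nonneg.2 ht)]
  ring_nf

theorem stmt11_general (a A B ξ ξ' c₁ c₂ c₁' c₂' C D : ℝ)
    (hid : ∀ x : ℝ,
      a * x + A
        - ξ * Real.sqrt (c₁ * (max (x + B) 0) ^ 2 + c₂ * (max (-(x + B)) 0) ^ 2 + C)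
        + ξ' * Real.sqrt (c₁' * (max x 0) ^ 2 + c₂' * (max (-x) 0) ^ 2 + D) = 0) :
    a - ξ * Real.sqrt c₁ + ξ' * Real.sqrt c₁' = 0 ∧
      a + ξ * Real.sqrt c₂ - ξ' * Real.sqrt c₂' = 0 := by
  constructor
  · refine slope_eq_zero_of_eventually_eq_zero a A B ξ ξ' c₁ c₁' C D ?_
    filter_upwards [eventually_ge_atTop 0, eventually_ge_atTop (-B)] with x hx hxB
    have := hid x
    rwa [sqrt_max_sq_add_of_nonneg (by linarith : 0 ≤ x + B),
      sqrt_max_sq_add_of_nonneg hx] at this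
  · have hneg := slope_eq_zero_of_eventually_eq_zero (-a) A (-B) ξ ξ' c₂ c₂' C D <| by
      filter_upwards [eventually_ge_atTop 0, eventually_ge_atTop B] with y hy hyB
      have := hid (-y)
      rwa [sqrt_max_sq_add_of_nonpos (by linarith : -y + B ≤ 0),
        sqrt_max_sq_add_of_nonpos (neg_nonpos.2 hy), neg_sq, mul_neg, ← neg_mul,
        show (-y + B) ^ 2 = (y + -B) ^ 2 by ring] at this
    linarith

/-- **First identity condition from the identifiability proof.**
If `a·x + A − ξ·√(c₁((x+B)⁺)² + c₂((x+B)⁻)² + C) + ξ'·√(c₁'(x⁺)² + c₂'(x⁻)² + D) = 0`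
for every real `x`, then `a − ξ√c₁ + ξ'√c₁' = 0` and `a + ξ√c₂ − ξ'√c₂' = 0`. -/
theorem stmt11 (a A B ξ ξ' c₁ c₂ c₁' c₂' C D : ℝ)
    (hc₁ : 0 ≤ c₁) (hc₂ : 0 ≤ c₂) (hc₁' : 0 ≤ c₁') (hc₂' : 0 ≤ c₂')
    (hC : 0 ≤ C) (hD : 0 ≤ D)
    (hid : ∀ x : ℝ,
      a * x + A
        - ξ * Real.sqrt (c₁ * (max (x + B) 0) ^ 2 + c₂ * (max (-(x + B)) 0) ^ 2 + C)
        + ξ' * Real.sqrt (c₁' * (max x 0) ^ 2 + c₂' * (max (-x) 0) ^ 2 + D) = 0) :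
    a - ξ * Real.sqrt c₁ + ξ' * Real.sqrt c₁' = 0 ∧
      a + ξ * Real.sqrt c₂ - ξ' * Real.sqrt c₂' = 0 :=
  stmt11_general a A B ξ ξ' c₁ c₂ c₁' c₂' C D hid
end
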